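/- Let n ≥ 1 and let A be an MR-subalgebra of 𝓛ₙ with tp(A) = ⟨t₁, …, tₙ⟩ and k = Σᵢ tᵢ. Let ρ : Stab(A) → Aut(A) be the group homomorphism given by restriction, φ ↦ φ|A, where Stab(A) = {φ ∈ Aut(𝓛ₙ) : φ[A] = A}. Then the image of ρ has cardinality 2^{k} · ∏_{i=1}^{n} tᵢ!. -/

import Mathlib

@[ext] structure Cube (n : ℕ) where
  pos : Finset (Fin n)
  neg : Finset (Fin n)
  disj : Disjoint pos neg

namespace Cube
variable {n : ℕ}

instance : PartialOrder (Cube n) where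
  le x y := y.pos ⊆ x.pos ∧ y.neg ⊆ x.neg
  le_refl x := ⟨subset_rfl, subset_rfl⟩
  le_trans x y z h₁ h₂ := ⟨h₂.1.trans h₁.1, h₂.2.trans h₁.2⟩
  le_antisymm x y h₁ h₂ :=
    Cube.ext (subset_antisymm h₂.1 h₁.1) (subset_antisymm h₂.2 h₁.2)

instance : OrderTop (Cube n) where
  top := ⟨∅, ∅, by simp⟩
  le_top x := ⟨Finset.empty_subset _, Finset.empty_subset _⟩

instance : SemilatticeSup (Cube n) where
  sup x y := ⟨x.pos ∩ y.pos, x.neg ∩ y.neg,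
    x.disj.mono Finset.inter_subset_left Finset.inter_subset_left⟩
  le_sup_left x y := ⟨Finset.inter_subset_left, Finset.inter_subset_left⟩
  le_sup_right x y := ⟨Finset.inter_subset_right, Finset.inter_subset_right⟩
  sup_le x y z hx hy := ⟨Finset.subset_inter hx.1 hy.1, Finset.subset_inter hx.2 hy.2⟩

/-- The reflection `Δ(x, y)` of `y` through the centre of `x`. -/
def delta (x y : Cube n) : Cube n :=
  ⟨x.pos ∪ (y.neg \ x.neg), x.neg ∪ (y.pos \ x.pos), by
    simp only [Finset.disjoint_union_left, Finset.disjoint_union_right]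
    refine ⟨⟨x.disj, Finset.sdiff_disjoint⟩, Finset.disjoint_sdiff, ?_⟩
    exact y.disj.symm.mono Finset.sdiff_subset Finset.sdiff_subset⟩

lemma delta_le (x y : Cube n) : delta x y ≤ x :=
  ⟨Finset.subset_union_left, Finset.subset_union_left⟩

/-- The co-rank of a face of the `n`-cube. -/
def corank (x : Cube n) : ℕ := (x.pos ∪ x.neg).card

/-- The set of coatoms of `𝓛ₙ` lying above `a`. -/
def coatomsAbove (a : Cube n) : Set (Cube n) := {c | corank c = 1 ∧ a ≤ c}

/-- `A` is an MR-subalgebra of `𝓛ₙ`. -/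
def IsMRSub (A : Set (Cube n)) : Prop :=
  ⊤ ∈ A ∧ (∀ x ∈ A, ∀ y ∈ A, x ⊔ y ∈ A) ∧
    (∀ x ∈ A, ∀ y ∈ A, y ≤ x → delta x y ∈ A) ∧
    (∀ x ∈ A, ∀ y ∈ A, ∃ m ∈ A, IsGLB {x, delta (x ⊔ y) y} m)

/-- The coatoms of a subalgebra `A`: maximal elements of `A \ {⊤}`. -/
def coAt (A : Set (Cube n)) : Set (Cube n) :=
  {a | a ∈ A ∧ a ≠ ⊤ ∧ ∀ b ∈ A, b ≠ ⊤ → a ≤ b → b = a}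

/-- The coatoms `a` of `A` with `|𝒞ₐ| = i`. -/
def typeSet (A : Set (Cube n)) (i : ℕ) : Set (Cube n) :=
  {a | a ∈ coAt A ∧ (coatomsAbove a).ncard = i}

/-- An order automorphism of `𝓛ₙ` is a cubic automorphism when it preserves `Δ`. -/
def IsAut (φ : Cube n ≃o Cube n) : Prop :=
  ∀ x y : Cube n, y ≤ x → φ (delta x y) = delta (φ x) (φ y)

/-- The set of automorphisms of `𝓛ₙ`. -/
def AutSet (n : ℕ) : Set (Cube n ≃o Cube n) := {φ | IsAut φ}

/-- An automorphism of the subposet `A` preserving `Δ`. -/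
def IsSubAut {A : Set (Cube n)} (ψ : A ≃o A) : Prop :=
  ∀ (x y : A), (y : Cube n) ≤ (x : Cube n) → ∀ h : delta ↑x ↑y ∈ A,
    (ψ ⟨delta ↑x ↑y, h⟩ : Cube n) = delta ↑(ψ x) ↑(ψ y)

end Cube

/-!
Every element of an MR-subalgebra `A` arises from `⊤` by repeatedly meeting with coatoms of `A`
(erase the coordinates of a coatom above it and meet back), and `A` is closed under the binary
meets that exist in `𝓛ₙ`. So an automorphism of `𝓛ₙ` stabilises `A` as soon as it permutes
`CoAt(A)`, and its restriction to `A` is determined by that permutation. Two coatoms of `A` have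
disjoint supports unless they are equal or antipodal; hence a permutation of `CoAt(A)` is induced
by a signed permutation of the coordinates exactly when it commutes with the antipode and
preserves `|𝒞ₐ| = |supp a|`. Choosing one coatom from each of the `k` antipodal pairs, such a
permutation is a type-preserving permutation of the representatives together with a sign for
each of them: `2^k ∏ tᵢ!` choices.
-/

open Equiv Function

lemma Function.Involutive.exists_prodBool_equiv {X : Type*} {τ : Perm X} (hτ : Involutive τ)
    (hfix : ∀ x, τ x ≠ x) :
    ∃ (R : Set X) (e : R × Bool ≃ X), ∀ p, e (p.1, !p.2) = τ (e p) := by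
  let _ : LinearOrder X := IsWellOrder.linearOrder WellOrderingRel
  let f (p : {x | x < τ x} × Bool) : X := cond p.2 p.1 (τ p.1)
  have hf : Bijective f := by
    constructor
    · rintro ⟨⟨r, hr : r < τ r⟩, _ | _⟩ ⟨⟨r', hr' : r' < τ r'⟩, _ | _⟩ (h : f _ = f _) <;>
        dsimp only [f, cond] at h
      · simp [τ.injective h]
      · exact absurd hr (lt_asymm (by simpa [← h, hτ r] using hr'))
      · exact absurd hr' (lt_asymm (by simpa [h, hτ r'] using hr))
      · simp [h]
    · intro x
      rcases lt_trichotomy x (τ x) with h | h | h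
      · exact ⟨(⟨x, h⟩, true), rfl⟩
      · exact absurd h.symm (hfix x)
      · refine ⟨(⟨τ x, ?_⟩, false), hτ x⟩
        change τ x < τ (τ x)
        rwa [hτ x]
  refine ⟨_, Equiv.ofBijective f hf, fun ⟨r, b⟩ => ?_⟩
  cases b
  · exact (hτ r).symm
  · rfl

section Counting
variable {R ι : Type*}

def signedShear (f : Perm R) (g : R → Bool) : Perm (R × Bool) where
  toFun p := (f p.1, xor (g p.1) p.2)
  invFun p := (f.symm p.1, xor (g (f.symm p.1)) p.2)
  left_inv p := by simp
  right_inv p := by simp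

lemma Nat.card_perm_commute_flip [Finite R] (s : R → ι) :
    Nat.card {π : Perm (R × Bool) //
      (∀ p, π (p.1, !p.2) = ((π p).1, !(π p).2)) ∧ ∀ p, s (π p).1 = s p.1} =
      2 ^ Nat.card R * Nat.card {f : Perm R // s ∘ f = s} := by
  let Φ (q : {f : Perm R // s ∘ f = s} × (R → Bool)) :
      {π : Perm (R × Bool) // (∀ p, π (p.1, !p.2) = ((π p).1, !(π p).2)) ∧
        ∀ p, s (π p).1 = s p.1} :=
    ⟨signedShear q.1 q.2, fun p => by simp [signedShear], fun p => congrFun q.1.2 p.1⟩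
  have hΦ : Bijective Φ := by
    constructor
    · rintro ⟨⟨f, hf⟩, g⟩ ⟨⟨f', hf'⟩, g'⟩ h
      have h' (r : R) := congrArg (fun π => (π.1 : Perm (R × Bool)) (r, false)) h
      simp only [Φ, signedShear, Equiv.coe_fn_mk, Bool.xor_false, Prod.mk.injEq] at h'
      simp only [Prod.mk.injEq, Subtype.mk.injEq]
      exact ⟨Equiv.ext fun r => (h' r).1, funext fun r => (h' r).2⟩
    · rintro ⟨π, hcomm, hs⟩
      have hinj : Injective fun r => (π (r, false)).1 := by
        intro r r' h
        rcases Bool.eq_or_eq_not (π (r, false)).2 (π (r', false)).2 with h₂ | h₂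
        · simpa using π.injective (Prod.ext h h₂)
        · have := π.injective ((hcomm (r', false)).trans (Prod.ext h.symm (by simp [h₂])))
          simp at this
      let f := Equiv.ofBijective _ (Finite.injective_iff_bijective.1 hinj)
      refine ⟨(⟨f, funext fun r => hs (r, false)⟩, fun r => (π (r, false)).2),
        Subtype.ext (Equiv.ext fun ⟨r, b⟩ => ?_)⟩
      cases b
      · simp [Φ, signedShear, f]
      · simpa [Φ, signedShear, f] using (hcomm (r, false)).symm
  rw [← Nat.card_congr (Equiv.ofBijective Φ hΦ), Nat.card_prod, Nat.card_fun,
    Nat.card_eq_fintype_card (α := Bool), Fintype.card_bool, mul_comm]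

lemma Nat.card_perm_commute_of_equiv {X : Type*} [Finite R] {τ : Perm X} (e : R × Bool ≃ X)
    (he : ∀ p, e (p.1, !p.2) = τ (e p)) {s : X → ι} {s₀ : R → ι}
    (hs : ∀ p, s (e p) = s₀ p.1) :
    Nat.card {π : Perm X // (∀ x, π (τ x) = τ (π x)) ∧ ∀ x, s (π x) = s x} =
      2 ^ Nat.card R * Nat.card {f : Perm R // s₀ ∘ f = s₀} := by
  rw [← Nat.card_perm_commute_flip]
  refine Nat.card_congr (e.permCongr.subtypeEquiv fun π => ?_).symm
  simp only [permCongr_apply]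
  rw [← e.forall_congr_right, ← e.forall_congr_right]
  simp only [← he, symm_apply_apply, hs, e.apply_eq_iff_eq]

lemma Nat.card_fiber_of_equiv_prodBool {X : Type*} (e : R × Bool ≃ X) {s : X → ι}
    {s₀ : R → ι} (hs : ∀ p, s (e p) = s₀ p.1) (i : ι) :
    Nat.card {x // s x = i} = 2 * Nat.card {r // s₀ r = i} := by
  rw [Nat.card_congr (e.symm.subtypeEquiv (q := fun p => s₀ p.1 = i) fun x => by
      rw [← hs, apply_symm_apply]),
    Nat.card_congr (prodSubtypeFstEquivSubtypeProd (p := fun r => s₀ r = i)), Nat.card_prod,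
    Nat.card_eq_fintype_card (α := Bool), Fintype.card_bool, mul_comm]

lemma Nat.card_eq_sum_card_fiber [Finite R] (s : R → ι) {S : Finset ι} (hS : ∀ r, s r ∈ S) :
    Nat.card R = ∑ i ∈ S, Nat.card {r // s r = i} := by
  classical
  have := Fintype.ofFinite R
  simp only [Nat.card_eq_fintype_card, Fintype.card_subtype]
  exact Finset.card_eq_sum_card_fiberwise fun r _ => hS r

lemma Nat.card_perm_comp_eq_self [Finite R] (s : R → ι) {S : Finset ι} (hS : ∀ r, s r ∈ S) :
    Nat.card {f : Perm R // s ∘ f = s} = ∏ i ∈ S, (Nat.card {r // s r = i}).factorial := by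
  classical
  have := Fintype.ofFinite R
  simp only [Nat.card_eq_fintype_card, DomMulAct.stabilizer_card']
  refine Finset.prod_subset (fun i hi => ?_) fun i _ hi => ?_
  · obtain ⟨r, -, rfl⟩ := Finset.mem_image.1 hi
    exact hS r
  · have : IsEmpty {r // s r = i} :=
      ⟨fun r => hi (Finset.mem_image.2 ⟨r.1, Finset.mem_univ _, r.2⟩)⟩
    rw [Fintype.card_eq_zero, Nat.factorial_zero]

end Counting

lemma Equiv.Perm.exists_apply_mem_iff_of_pairwise_disjoint {ι α : Type*} [Finite α]
    {U V : ι → Finset α} (hU : Pairwise (_root_.Disjoint on U))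
    (hV : Pairwise (_root_.Disjoint on V)) (hcard : ∀ r, (U r).card = (V r).card) :
    ∃ σ : Perm α, ∀ r x, σ x ∈ V r ↔ x ∈ U r := by
  have sigma_injective {W : ι → Finset α} (hW : Pairwise (_root_.Disjoint on W)) :
      Injective fun p : Σ r, W r => (p.2 : α) := by
    rintro ⟨r, x⟩ ⟨r', x'⟩ (h : (x : α) = x')
    obtain rfl : r = r' := by_contra fun hne => Finset.disjoint_left.1 (hW hne) x.2 (h ▸ x'.2)
    exact Sigma.subtype_ext rfl h
  let e (r : ι) : U r ≃ V r := Finset.equivOfCardEq (hcard r)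
  have : Finite (Σ r, U r) := Finite.of_injective _ (sigma_injective hU)
  obtain ⟨σ, hσ⟩ := Perm.exists_extending_pair _ (fun p : Σ r, U r => (e p.1 p.2 : α))
    (sigma_injective hU) ((sigma_injective hV).comp (Equiv.sigmaCongrRight e).injective)
  refine ⟨σ, fun r x => ⟨fun hx => ?_, fun hx => hσ ⟨r, x, hx⟩ ▸ (e r _).2⟩⟩
  obtain ⟨y, hy⟩ := (e r).surjective ⟨σ x, hx⟩
  have : σ y = σ x := (hσ ⟨r, y⟩).trans (congrArg Subtype.val hy)
  exact σ.injective this ▸ y.2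

namespace Cube
variable {n : ℕ}

instance : Finite (Cube n) :=
  Finite.of_injective (fun x : Cube n => (x.pos, x.neg)) fun x y h => by
    cases x; cases y; simp_all

/-- The sign of the `i`-th coordinate of the face `x`; `none` when that coordinate is free. -/
def sign (x : Cube n) (i : Fin n) : Option Bool :=
  if i ∈ x.pos then some true else if i ∈ x.neg then some false else none

section Sign
variable {x y : Cube n} {i : Fin n}

lemma sign_eq_some_true : x.sign i = some true ↔ i ∈ x.pos := by
  unfold sign; split_ifs <;> simp_all

lemma sign_eq_some_false : x.sign i = some false ↔ i ∈ x.neg := by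
  have : i ∈ x.pos → i ∉ x.neg := fun h => Finset.disjoint_left.1 x.disj h
  unfold sign; split_ifs <;> simp_all

lemma ext_sign (h : ∀ i, x.sign i = y.sign i) : x = y := by
  ext i
  · rw [← sign_eq_some_true, ← sign_eq_some_true, h]
  · rw [← sign_eq_some_false, ← sign_eq_some_false, h]

lemma le_iff_sign : x ≤ y ↔ ∀ i, y.sign i ≠ none → x.sign i = y.sign i := by
  refine ⟨fun h i hi => ?_, fun h => ⟨fun i hi => ?_, fun i hi => ?_⟩⟩
  · obtain ⟨b, hb⟩ := Option.ne_none_iff_exists'.1 hi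
    rw [hb]
    cases b
    · exact sign_eq_some_false.2 (h.2 (sign_eq_some_false.1 hb))
    · exact sign_eq_some_true.2 (h.1 (sign_eq_some_true.1 hb))
  · rw [← sign_eq_some_true, h i (by simp [sign_eq_some_true.2 hi]), sign_eq_some_true.2 hi]
  · rw [← sign_eq_some_false, h i (by simp [sign_eq_some_false.2 hi]), sign_eq_some_false.2 hi]

@[simp] lemma sign_top : (⊤ : Cube n).sign i = none := rfl

@[simp] lemma sign_sup : (x ⊔ y).sign i = if x.sign i = y.sign i then x.sign i else none := by
  have d1 : i ∈ x.pos → i ∉ x.neg := fun h => Finset.disjoint_left.1 x.disj h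
  have d2 : i ∈ y.pos → i ∉ y.neg := fun h => Finset.disjoint_left.1 y.disj h
  change sign ⟨_, _, _⟩ i = _
  unfold sign
  simp only [Finset.mem_inter]
  by_cases h1 : i ∈ x.pos <;> by_cases h2 : i ∈ x.neg <;>
    by_cases h3 : i ∈ y.pos <;> by_cases h4 : i ∈ y.neg <;> simp_all

@[simp] lemma sign_delta : (delta x y).sign i = (x.sign i).or ((y.sign i).map not) := by
  have d1 : i ∈ x.pos → i ∉ x.neg := fun h => Finset.disjoint_left.1 x.disj h
  have d2 : i ∈ y.pos → i ∉ y.neg := fun h => Finset.disjoint_left.1 y.disj h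
  unfold delta sign
  simp only [Finset.mem_union, Finset.mem_sdiff]
  by_cases h1 : i ∈ x.pos <;> by_cases h2 : i ∈ x.neg <;>
    by_cases h3 : i ∈ y.pos <;> by_cases h4 : i ∈ y.neg <;> simp_all

end Sign

def ofSign (f : Fin n → Option Bool) : Cube n :=
  ⟨{i | f i = some true}, {i | f i = some false},
    Finset.disjoint_filter.2 fun i _ h => by simp [h]⟩

@[simp] lemma sign_ofSign (f : Fin n → Option Bool) (i : Fin n) : (ofSign f).sign i = f i := by
  unfold sign ofSign
  rcases h : f i with _ | _ | _ <;> simp [h]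

section SignedPerm
variable (σ : Perm (Fin n)) (ε : Fin n → Bool)

def signedPerm : Cube n ≃o Cube n where
  toFun x := ofSign fun j => (x.sign (σ.symm j)).map (xor (ε (σ.symm j)))
  invFun y := ofSign fun i => (y.sign (σ i)).map (xor (ε i))
  left_inv x := ext_sign fun i => by simp [Option.map_map, Function.comp_def]
  right_inv y := ext_sign fun j => by simp [Option.map_map, Function.comp_def]
  map_rel_iff' {x y} := by
    simp only [Equiv.coe_fn_mk, le_iff_sign, sign_ofSign]
    rw [← σ.forall_congr_right]
    have hinj (e : Bool) : Injective (xor e) := fun a b h => by simpa using h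
    simp [(Option.map_injective (hinj _)).eq_iff]

@[simp] lemma sign_signedPerm (x : Cube n) (i : Fin n) :
    (signedPerm σ ε x).sign (σ i) = (x.sign i).map (xor (ε i)) := by
  simp [signedPerm]

lemma isAut_signedPerm : IsAut (signedPerm σ ε) := by
  intro x y _
  refine ext_sign fun j => ?_
  obtain ⟨i, rfl⟩ := σ.surjective j
  simp only [sign_signedPerm, sign_delta]
  rcases x.sign i with _ | _ | _ <;> rcases y.sign i with _ | _ | _ <;> cases ε i <;> rfl

end SignedPerm

def anti : Cube n ≃o Cube n := signedPerm 1 fun _ => true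

@[simp] lemma sign_anti (x : Cube n) (i : Fin n) : (anti x).sign i = (x.sign i).map not := by
  have h := sign_signedPerm 1 (fun _ => true) x i
  rw [Perm.one_apply] at h
  rw [anti, h]
  rcases x.sign i with _ | _ | _ <;> rfl

lemma anti_eq_delta_top (x : Cube n) : anti x = delta ⊤ x := ext_sign fun i => by simp

@[simp] lemma anti_anti (x : Cube n) : anti (anti x) = x := ext_sign fun i => by
  simp [Option.map_map, Function.comp_def]

lemma anti_ne_self {x : Cube n} (hx : x ≠ ⊤) : anti x ≠ x := fun h => hx (ext_sign fun i => by
  have := congrArg (sign · i) h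
  rw [sign_anti] at this
  rcases hi : x.sign i with _ | _ | _ <;> simp [hi] at this ⊢)

lemma IsAut.map_anti {φ : Cube n ≃o Cube n} (hφ : IsAut φ) (x : Cube n) :
    φ (anti x) = anti (φ x) := by
  rw [anti_eq_delta_top, anti_eq_delta_top, hφ ⊤ x le_top, map_top]

def supp (x : Cube n) : Finset (Fin n) := x.pos ∪ x.neg

section Supp
variable {x y : Cube n} {i : Fin n}

lemma corank_eq_card_supp : corank x = x.supp.card := rfl

lemma mem_supp : i ∈ x.supp ↔ x.sign i ≠ none := by
  unfold supp sign; split_ifs <;> simp_all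

lemma supp_eq_empty : x.supp = ∅ ↔ x = ⊤ := by
  refine ⟨fun h => ext_sign fun i => ?_, fun h => h ▸ rfl⟩
  simpa [mem_supp] using Finset.eq_empty_iff_forall_notMem.1 h i

@[simp] lemma supp_anti : (anti x).supp = x.supp := by
  ext i; simp [mem_supp]

lemma supp_subset_of_le (h : x ≤ y) : y.supp ⊆ x.supp := fun i hi => by
  rw [mem_supp] at hi ⊢
  rwa [le_iff_sign.1 h i hi]

end Supp

def restrict (x : Cube n) (s : Finset (Fin n)) : Cube n :=
  ofSign fun i => if i ∈ s then x.sign i else none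

section Restrict
variable {x y : Cube n} {s : Finset (Fin n)}

@[simp] lemma sign_restrict (i : Fin n) :
    (x.restrict s).sign i = if i ∈ s then x.sign i else none := sign_ofSign _ i

@[simp] lemma supp_restrict : (x.restrict s).supp = x.supp ∩ s := by
  ext i; by_cases hi : i ∈ s <;> simp [mem_supp, hi]

lemma le_restrict : x ≤ x.restrict s := le_iff_sign.2 fun i hi => by
  by_cases h : i ∈ s <;> simp_all

lemma eq_restrict_of_le (h : x ≤ y) : y = x.restrict y.supp := ext_sign fun i => by
  by_cases hi : i ∈ y.supp
  · rw [sign_restrict, if_pos hi, le_iff_sign.1 h i (mem_supp.1 hi)]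
  · rw [sign_restrict, if_neg hi]
    simpa [mem_supp] using hi

end Restrict

lemma corank_eq_one_iff {c : Cube n} : corank c = 1 ↔ IsCoatom c := by
  rw [corank_eq_card_supp]
  constructor
  · intro h
    obtain ⟨i, hi⟩ := Finset.card_eq_one.1 h
    refine ⟨fun hc => by simp [supp_eq_empty.2 hc] at hi, fun b hcb => ?_⟩
    rcases Finset.subset_singleton_iff.1 (hi ▸ supp_subset_of_le hcb.le) with hb | hb
    · exact supp_eq_empty.1 hb
    · refine absurd ?_ hcb.ne'
      rw [eq_restrict_of_le hcb.le, hb, ← hi, ← eq_restrict_of_le le_rfl]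
  · intro hc
    obtain ⟨i, hi⟩ := Finset.nonempty_iff_ne_empty.2 (mt supp_eq_empty.1 hc.1)
    have hsupp : (c.restrict {i}).supp = {i} := by simp [hi]
    rcases hc.le_iff.1 (le_restrict (s := {i})) with htop | heq
    · simp [htop, supp_eq_empty.2 rfl] at hsupp
    · rw [← heq, hsupp, Finset.card_singleton]

lemma ncard_coatomsAbove (a : Cube n) : (coatomsAbove a).ncard = a.supp.card := by
  have himage : coatomsAbove a = (fun i => a.restrict {i}) '' a.supp := by
    ext c
    constructor
    · rintro ⟨hc, hac⟩
      obtain ⟨i, hi⟩ := Finset.card_eq_one.1 (corank_eq_card_supp ▸ hc)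
      refine ⟨i, supp_subset_of_le hac (by simp [hi]), ?_⟩
      rw [eq_restrict_of_le hac, hi]
    · rintro ⟨i, hi, rfl⟩
      exact ⟨by simp [corank_eq_card_supp, Finset.mem_coe.1 hi], le_restrict⟩
  rw [himage, Set.InjOn.ncard_image, Set.ncard_coe_finset]
  intro i hi j hj hij
  simpa [Finset.mem_coe.1 hi, Finset.mem_coe.1 hj] using congrArg supp hij

lemma ncard_coatomsAbove_map (φ : Cube n ≃o Cube n) (a : Cube n) :
    (coatomsAbove (φ a)).ncard = (coatomsAbove a).ncard := by
  have : coatomsAbove (φ a) = φ '' coatomsAbove a := by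
    ext c
    obtain ⟨c, rfl⟩ := φ.surjective c
    simp [coatomsAbove, corank_eq_one_iff, φ.isCoatom_iff, φ.le_iff_le]
  rw [this, Set.ncard_image_of_injective _ φ.injective]

lemma ncard_typeSet (A : Set (Cube n)) (i : ℕ) :
    (typeSet A i).ncard = Nat.card {a : coAt A // (coatomsAbove (a : Cube n)).ncard = i} := by
  rw [← Nat.card_coe_set_eq]
  exact Nat.card_congr (subtypeSubtypeEquivSubtypeInter (· ∈ coAt A)
    fun x => (coatomsAbove x).ncard = i).symm

lemma card_supp_mem_Icc {x : Cube n} (hx : x ≠ ⊤) : x.supp.card ∈ Finset.Icc 1 n := by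
  refine Finset.mem_Icc.2 ⟨Finset.card_pos.2 ?_, (Finset.card_le_univ _).trans_eq (by simp)⟩
  exact Finset.nonempty_iff_ne_empty.2 (mt supp_eq_empty.1 hx)

lemma exists_isAut_apply_eq {ι : Type*} (u v : ι → Cube n)
    (hu : Pairwise (Disjoint on fun r => (u r).supp))
    (hv : Pairwise (Disjoint on fun r => (v r).supp))
    (hcard : ∀ r, (u r).supp.card = (v r).supp.card) :
    ∃ φ : Cube n ≃o Cube n, IsAut φ ∧ ∀ r, φ (u r) = v r := by
  classical
  obtain ⟨σ, hσ⟩ := Perm.exists_apply_mem_iff_of_pairwise_disjoint hu hv hcard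
  -- `i` lies in at most one support `(u r).supp`; reverse it iff `u r` and `v r` disagree there.
  let ε i := decide (∃ r, (u r).sign i ≠ (v r).sign (σ i))
  refine ⟨signedPerm σ ε, isAut_signedPerm σ ε, fun r => ext_sign fun j => ?_⟩
  obtain ⟨i, rfl⟩ := σ.surjective j
  rw [sign_signedPerm]
  by_cases hi : i ∈ (u r).supp
  · have hother (r' : ι) (hr' : r' ≠ r) : (u r').sign i = (v r').sign (σ i) := by
      have hu' : (u r').sign i = none := by
        simpa [mem_supp] using Finset.disjoint_left.1 (hu hr'.symm) hi
      have hv' : (v r').sign (σ i) = none := by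
        simpa [mem_supp] using Finset.disjoint_left.1 (hv hr'.symm) ((hσ r i).2 hi)
      rw [hu', hv']
    have hε : ε i = decide ((u r).sign i ≠ (v r).sign (σ i)) := by
      simp only [ε, decide_eq_decide]
      refine ⟨fun ⟨r', h⟩ => ?_, fun h => ⟨r, h⟩⟩
      obtain rfl : r' = r := by_contra fun hr' => h (hother r' hr')
      exact h
    obtain ⟨b, hb⟩ := Option.ne_none_iff_exists'.1 (mem_supp.1 hi)
    obtain ⟨c, hc⟩ := Option.ne_none_iff_exists'.1 (mem_supp.1 ((hσ r i).2 hi))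
    rw [hε, hb, hc]
    cases b <;> cases c <;> rfl
  · have hu' : (u r).sign i = none := by simpa [mem_supp] using hi
    have hv' : (v r).sign (σ i) = none := by simpa [mem_supp] using mt (hσ r i).1 hi
    rw [hu', hv']
    rfl

lemma isGLB_pair_of_sign {u v m : Cube n} (hu : m ≤ u) (hv : m ≤ v)
    (h : ∀ i, m.sign i = (u.sign i).or (v.sign i)) : IsGLB {u, v} m := by
  refine ⟨by simp [lowerBounds, hu, hv], fun z hz => le_iff_sign.2 fun i hi => ?_⟩
  have hzu : z ≤ u := hz (by simp)
  have hzv : z ≤ v := hz (by simp)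
  rw [h] at hi ⊢
  rcases hui : u.sign i with _ | b
  · simp only [hui, Option.none_or] at hi ⊢
    exact le_iff_sign.1 hzv i hi
  · rw [Option.some_or, ← hui]
    exact le_iff_sign.1 hzu i (by simp [hui])

lemma isGLB_caret (x y : Cube n) : IsGLB {x, delta (x ⊔ y) y} (delta x y) := by
  refine isGLB_pair_of_sign (delta_le x y) (le_iff_sign.2 fun i _ => ?_) fun i => ?_ <;>
    rcases hx : x.sign i with _ | _ | _ <;> rcases hy : y.sign i with _ | _ | _ <;> simp_all

section IsMRSub
variable {A : Set (Cube n)}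

lemma IsMRSub.delta_mem (hA : IsMRSub A) {x y : Cube n} (hx : x ∈ A) (hy : y ∈ A) :
    delta x y ∈ A := by
  obtain ⟨m, hm, hglb⟩ := hA.2.2.2 x hx y hy
  rwa [hglb.unique (isGLB_caret x y)] at hm

lemma IsMRSub.anti_mem (hA : IsMRSub A) {x : Cube n} (hx : x ∈ A) : anti x ∈ A :=
  anti_eq_delta_top x ▸ hA.delta_mem hA.1 hx

/-- In `𝓛ₙ` a meet of two faces is their union, which `A` contains as `Δ(u, anti v)`. -/
lemma IsMRSub.isGLB_mem (hA : IsMRSub A) {u v m : Cube n} (hu : u ∈ A) (hv : v ∈ A)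
    (h : IsGLB {u, v} m) : m ∈ A := by
  have hmu : m ≤ u := h.1 (by simp)
  have hmv : m ≤ v := h.1 (by simp)
  have hsign (i : Fin n) : (delta u (anti v)).sign i = (u.sign i).or (v.sign i) := by
    simp [Option.map_map, Function.comp_def]
  have hle : delta u (anti v) ≤ v := le_iff_sign.2 fun i hi => by
    rw [hsign]
    rcases hui : u.sign i with _ | b
    · rfl
    · rw [Option.some_or, ← hui, ← le_iff_sign.1 hmu i (by simp [hui]), le_iff_sign.1 hmv i hi]
  rw [h.unique (isGLB_pair_of_sign (delta_le _ _) hle hsign)]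
  exact hA.delta_mem hu (hA.anti_mem hv)

lemma coAt_eq_setOf_maximal (A : Set (Cube n)) : coAt A = {a | Maximal (· ∈ A \ {⊤}) a} := by
  ext a
  simp only [coAt, Maximal, Set.mem_sdiff, Set.mem_singleton_iff, Set.mem_ofPred_eq]
  refine and_assoc.symm.trans (and_congr_right fun ha => forall_congr' fun b => ?_)
  exact ⟨fun h ⟨hb, hbt⟩ hab => (h hb hbt hab).le,
    fun h hb hbt hab => (h ⟨hb, hbt⟩ hab).antisymm hab⟩

lemma apply_mem_iff_of_image_eq {φ : Cube n ≃o Cube n} (h : φ '' A = A) {x : Cube n} :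
    φ x ∈ A ↔ x ∈ A := by
  conv_lhs => rw [← h]
  exact φ.injective.mem_set_image

lemma image_coAt {φ : Cube n ≃o Cube n} (h : φ '' A = A) : φ '' coAt A = coAt A := by
  have hsymm (x : Cube n) : φ.symm x ∈ A ↔ x ∈ A := by
    simpa using (apply_mem_iff_of_image_eq h (x := φ.symm x)).symm
  rw [coAt_eq_setOf_maximal, φ.image_setOfPred_maximal]
  simp [hsymm, φ.symm_apply_eq]

lemma mem_coAt_iff_of_image_eq {φ : Cube n ≃o Cube n} (h : φ '' A = A) {a : Cube n} :
    φ a ∈ coAt A ↔ a ∈ coAt A :=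
  apply_mem_iff_of_image_eq (image_coAt h)

lemma IsMRSub.anti_mem_coAt (hA : IsMRSub A) {a : Cube n} (ha : a ∈ coAt A) :
    anti a ∈ coAt A := by
  have h : anti '' A = A :=
    Set.Subset.antisymm (Set.image_subset_iff.2 fun x => hA.anti_mem)
      fun x hx => ⟨anti x, hA.anti_mem hx, anti_anti x⟩
  exact (mem_coAt_iff_of_image_eq h).2 ha

lemma IsMRSub.sup_eq_top_of_mem_coAt (hA : IsMRSub A) {a b : Cube n} (ha : a ∈ coAt A)
    (hb : b ∈ coAt A) (hab : a ≠ b) : a ⊔ b = ⊤ := by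
  by_contra h
  have hsup : a ⊔ b ∈ A := hA.2.1 a ha.1 b hb.1
  exact hab ((ha.2.2 _ hsup h le_sup_left).symm.trans (hb.2.2 _ hsup h le_sup_right))

lemma IsMRSub.disjoint_supp_of_mem_coAt (hA : IsMRSub A) {a b : Cube n} (ha : a ∈ coAt A)
    (hb : b ∈ coAt A) (hab : a ≠ b) (hab' : a ≠ anti b) : Disjoint a.supp b.supp := by
  refine Finset.disjoint_left.2 fun i hia hib => ?_
  obtain ⟨s, hs⟩ := Option.ne_none_iff_exists'.1 (mem_supp.1 hia)
  obtain ⟨t, ht⟩ := Option.ne_none_iff_exists'.1 (mem_supp.1 hib)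
  have h₁ := congrArg (sign · i) (hA.sup_eq_top_of_mem_coAt ha hb hab)
  have h₂ := congrArg (sign · i) (hA.sup_eq_top_of_mem_coAt ha (hA.anti_mem_coAt hb) hab')
  cases s <;> cases t <;> simp_all

lemma IsMRSub.exists_isGLB_coAt (hA : IsMRSub A) {x : Cube n} (hx : x ∈ A) (hxt : x ≠ ⊤) :
    ∃ y ∈ A, ∃ a ∈ coAt A, y.supp.card < x.supp.card ∧ IsGLB {y, a} x := by
  obtain ⟨a, hxa, hmax⟩ := (Set.toFinite (A \ {⊤})).exists_le_maximal ⟨hx, hxt⟩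
  have ha : a ∈ coAt A := by rw [coAt_eq_setOf_maximal]; exact hmax
  have hy : x ⊔ anti (delta a x) = x.restrict a.suppᶜ := ext_sign fun i => by
    by_cases hi : i ∈ a.supp
    · obtain ⟨b, hb⟩ := Option.ne_none_iff_exists'.1 (mem_supp.1 hi)
      have hxb : x.sign i = some b := by rw [le_iff_sign.1 hxa i (mem_supp.1 hi), hb]
      cases b <;> simp [hi, hb, hxb]
    · have hai : a.sign i = none := by simpa [mem_supp] using hi
      simp [hi, hai, Option.map_map, Function.comp_def]
  have hyA : x.restrict a.suppᶜ ∈ A :=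
    hy ▸ hA.2.1 x hx _ (hA.anti_mem (hA.delta_mem ha.1 hx))
  refine ⟨_, hyA, a, ha, Finset.card_lt_card ?_, isGLB_pair_of_sign le_restrict hxa fun i => ?_⟩
  · rw [supp_restrict, ← Finset.sdiff_eq_inter_compl]
    exact Finset.sdiff_ssubset (supp_subset_of_le hxa)
      (Finset.nonempty_iff_ne_empty.2 (mt supp_eq_empty.1 ha.2.1))
  · by_cases hi : i ∈ a.supp
    · simp [hi, le_iff_sign.1 hxa i (mem_supp.1 hi)]
    · simp [hi, show a.sign i = none by simpa [mem_supp] using hi]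

theorem IsMRSub.induction_coAt (hA : IsMRSub A) {P : Cube n → Prop} (top : P ⊤)
    (meet : ∀ y ∈ A, ∀ a ∈ coAt A, ∀ x, IsGLB {y, a} x → P y → P x) :
    ∀ x ∈ A, P x := by
  intro x hx
  induction hk : x.supp.card using Nat.strong_induction_on generalizing x with
  | _ k ih =>
    by_cases hxt : x = ⊤
    · exact hxt ▸ top
    obtain ⟨y, hy, a, ha, hlt, hglb⟩ := hA.exists_isGLB_coAt hx hxt
    exact meet y hy a ha x hglb (ih _ (hk ▸ hlt) y hy rfl)

lemma IsMRSub.image_eq_of_forall_coAt (hA : IsMRSub A) (φ : Cube n ≃o Cube n)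
    (h : ∀ a ∈ coAt A, φ a ∈ A) : φ '' A = A := by
  have hmaps : ∀ x ∈ A, φ x ∈ A := hA.induction_coAt (by simpa using hA.1)
    fun y _ a ha x hx hy =>
      hA.isGLB_mem hy (h a ha) (by simpa [Set.image_pair] using φ.isGLB_image'.2 hx)
  refine Set.eq_of_subset_of_ncard_le (Set.image_subset_iff.2 hmaps) ?_ (Set.toFinite A)
  rw [Set.ncard_image_of_injective _ φ.injective]

lemma IsMRSub.eqOn_of_eqOn_coAt (hA : IsMRSub A) {φ ψ : Cube n ≃o Cube n}
    (h : Set.EqOn φ ψ (coAt A)) : Set.EqOn φ ψ A :=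
  hA.induction_coAt (P := fun x => φ x = ψ x) (by simp) fun y _ a ha x hx hy => by
    have hφ := φ.isGLB_image'.2 hx
    have hψ := ψ.isGLB_image'.2 hx
    rw [Set.image_pair, hy, h ha] at hφ
    rw [Set.image_pair] at hψ
    exact hφ.unique hψ

def antiCoAt (hA : IsMRSub A) : Perm (coAt A) where
  toFun a := ⟨anti a, hA.anti_mem_coAt a.2⟩
  invFun a := ⟨anti a, hA.anti_mem_coAt a.2⟩
  left_inv a := Subtype.ext (anti_anti (a : Cube n))
  right_inv a := Subtype.ext (anti_anti (a : Cube n))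

@[simp] lemma coe_antiCoAt (hA : IsMRSub A) (a : coAt A) : (antiCoAt hA a : Cube n) = anti a := rfl

lemma antiCoAt_involutive (hA : IsMRSub A) : Involutive (antiCoAt hA) :=
  fun a => Subtype.ext (by rw [coe_antiCoAt, coe_antiCoAt, anti_anti])

lemma antiCoAt_apply_ne (hA : IsMRSub A) (a : coAt A) : antiCoAt hA a ≠ a := fun h =>
  anti_ne_self a.2.2.1 (congrArg Subtype.val h)

lemma IsMRSub.exists_isAut_extending (hA : IsMRSub A) (π : Perm (coAt A))
    (hcomm : ∀ a, π (antiCoAt hA a) = antiCoAt hA (π a))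
    (hs : ∀ a, (coatomsAbove (π a : Cube n)).ncard = (coatomsAbove (a : Cube n)).ncard) :
    ∃ φ : Cube n ≃o Cube n, IsAut φ ∧ ∀ a : coAt A, φ a = π a := by
  obtain ⟨R, e, he⟩ := (antiCoAt_involutive hA).exists_prodBool_equiv (antiCoAt_apply_ne hA)
  have he' (r : R) : e (r, false) = antiCoAt hA (e (r, true)) := he (r, true)
  have hdisj (σ : Perm (coAt A)) (hσ : ∀ a, σ (antiCoAt hA a) = antiCoAt hA (σ a)) :
      Pairwise (Disjoint on fun r => (σ (e (r, true)) : Cube n).supp) := by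
    intro r r' hr
    refine hA.disjoint_supp_of_mem_coAt (σ _).2 (σ _).2 (fun h => hr ?_) fun h => hr ?_
    · simpa using e.injective (σ.injective (Subtype.ext h))
    · have : σ (e (r, true)) = σ (e (r', false)) := by
        rw [he', hσ]
        exact Subtype.ext h
      simpa using e.injective (σ.injective this)
  obtain ⟨φ, hφ, hφr⟩ := exists_isAut_apply_eq (fun r => (e (r, true) : Cube n))
    (fun r => (π (e (r, true)) : Cube n)) (by simpa using hdisj 1 (by simp)) (hdisj π hcomm)
    fun r => by rw [← ncard_coatomsAbove, ← ncard_coatomsAbove, hs]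
  refine ⟨φ, hφ, fun a => ?_⟩
  obtain ⟨⟨r, _ | _⟩, rfl⟩ := e.surjective a
  · rw [he', hcomm, coe_antiCoAt, coe_antiCoAt, hφ.map_anti, hφr]
  · exact hφr r

def restrictIso (φ : Cube n ≃o Cube n) (h : φ '' A = A) : A ≃o A where
  toEquiv := φ.toEquiv.subtypeEquiv fun _ => (apply_mem_iff_of_image_eq h).symm
  map_rel_iff' := φ.le_iff_le

theorem IsMRSub.ncard_image_restriction (hA : IsMRSub A) :
    {ψ : A ≃o A | IsSubAut ψ ∧ ∃ φ ∈ AutSet n, φ '' A = A ∧ ∀ x : A, (ψ x : Cube n) = φ ↑x}.ncard =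
      Nat.card {π : Perm (coAt A) // (∀ a, π (antiCoAt hA a) = antiCoAt hA (π a)) ∧
        ∀ a, (coatomsAbove (π a : Cube n)).ncard = (coatomsAbove (a : Cube n)).ncard} := by
  set N := {ψ : A ≃o A | IsSubAut ψ ∧
    ∃ φ ∈ AutSet n, φ '' A = A ∧ ∀ x : A, (ψ x : Cube n) = φ ↑x}
  set G : Set (Perm (coAt A)) := {π | (∀ a, π (antiCoAt hA a) = antiCoAt hA (π a)) ∧
    ∀ a, (coatomsAbove (π a : Cube n)).ncard = (coatomsAbove (a : Cube n)).ncard}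
  let F (ψ : A ≃o A) (a : coAt A) : Cube n := ψ ⟨a, a.2.1⟩
  let H (π : Perm (coAt A)) (a : coAt A) : Cube n := π a
  have hF : Set.InjOn F N := by
    rintro ψ₁ ⟨-, φ₁, -, -, hψ₁⟩ ψ₂ ⟨-, φ₂, -, -, hψ₂⟩ h
    have hA' : Set.EqOn φ₁ φ₂ A := hA.eqOn_of_eqOn_coAt fun a ha => by
      rw [← hψ₁ ⟨a, ha.1⟩, ← hψ₂ ⟨a, ha.1⟩]
      exact congrFun h ⟨a, ha⟩
    exact OrderIso.ext (funext fun x => Subtype.ext (by rw [hψ₁, hψ₂, hA' x.2]))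
  have hH : Injective H := fun π₁ π₂ h => Equiv.ext fun a => Subtype.ext (congrFun h a)
  have himage : F '' N = H '' G := by
    ext f
    constructor
    · rintro ⟨ψ, ⟨-, φ, hφ, hφA, hψ⟩, rfl⟩
      refine ⟨φ.toEquiv.subtypeEquiv fun a => (mem_coAt_iff_of_image_eq hφA).symm,
        ⟨fun a => Subtype.ext (hφ.map_anti a), fun a => ncard_coatomsAbove_map φ a⟩,
        funext fun a => (hψ ⟨a, a.2.1⟩).symm⟩
    · rintro ⟨π, ⟨hcomm, hs⟩, rfl⟩
      obtain ⟨φ, hφ, hφπ⟩ := hA.exists_isAut_extending π hcomm hs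
      have hφA : φ '' A = A :=
        hA.image_eq_of_forall_coAt φ fun a ha => hφπ ⟨a, ha⟩ ▸ (π ⟨a, ha⟩).2.1
      exact ⟨restrictIso φ hφA, ⟨fun x y hxy _ => hφ x y hxy, φ, hφ, hφA, fun x => rfl⟩,
        funext fun a => hφπ a⟩
  rw [← hF.ncard_image, himage, Set.ncard_image_of_injective _ hH, ← Nat.card_coe_set_eq]
  rfl

end IsMRSub

end Cube

theorem image_restriction_card_general (n : ℕ) (A : Set (Cube n))
    (hA : Cube.IsMRSub A)
    (t : ℕ → ℕ) (ht : ∀ i, 2 * t i = (Cube.typeSet A i).ncard)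
    (k : ℕ) (hk : k = ∑ i ∈ Finset.Icc 1 n, t i) :
    ({ψ : A ≃o A | Cube.IsSubAut ψ ∧
        ∃ φ ∈ Cube.AutSet n, φ '' A = A ∧ ∀ x : A, (ψ x : Cube n) = φ ↑x}).ncard =
      2 ^ k * ∏ i ∈ Finset.Icc 1 n, Nat.factorial (t i) := by
  obtain ⟨R, e, he⟩ :=
    (Cube.antiCoAt_involutive hA).exists_prodBool_equiv (Cube.antiCoAt_apply_ne hA)
  let s₀ (r : R) : ℕ := (Cube.coatomsAbove (e (r, true) : Cube n)).ncard
  have hs (p : R × Bool) : (Cube.coatomsAbove (e p : Cube n)).ncard = s₀ p.1 := by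
    obtain ⟨r, _ | _⟩ := p
    · rw [show e (r, false) = Cube.antiCoAt hA (e (r, true)) from he (r, true), Cube.coe_antiCoAt,
        Cube.ncard_coatomsAbove_map]
    · rfl
  have hS (r : R) : s₀ r ∈ Finset.Icc 1 n := by
    simpa only [s₀, Cube.ncard_coatomsAbove] using Cube.card_supp_mem_Icc (e (r, true)).2.2.1
  have ht' (i : ℕ) : t i = Nat.card {r // s₀ r = i} := by
    have := ht i
    rw [Cube.ncard_typeSet, Nat.card_fiber_of_equiv_prodBool e hs] at this
    omega
  rw [hA.ncard_image_restriction,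
    Nat.card_perm_commute_of_equiv e he (s := fun a => (Cube.coatomsAbove (a : Cube n)).ncard) hs,
    Nat.card_perm_comp_eq_self s₀ hS, hk, Nat.card_eq_sum_card_fiber s₀ hS]
  simp only [ht']

/-- The image of the restriction homomorphism `ρ : Stab(A) → Aut(A)` has
cardinality `2^k ∏ᵢ tᵢ!`. -/
theorem image_restriction_card (n : ℕ) (hn : 1 ≤ n) (A : Set (Cube n))
    (hA : Cube.IsMRSub A)
    (t : ℕ → ℕ) (ht : ∀ i, 2 * t i = (Cube.typeSet A i).ncard)
    (k : ℕ) (hk : k = ∑ i ∈ Finset.Icc 1 n, t i) :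
    ({ψ : A ≃o A | Cube.IsSubAut ψ ∧
        ∃ φ ∈ Cube.AutSet n, φ '' A = A ∧ ∀ x : A, (ψ x : Cube n) = φ ↑x}).ncard =
      2 ^ k * ∏ i ∈ Finset.Icc 1 n, Nat.factorial (t i) :=
  image_restriction_card_general n A hA t ht k hk
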